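/- arXiv:2003.06864 — 3 statements merged into one kernel-verified Lean document; each statement's English description precedes it below -/
import Mathlib

section
/- Let K ⊂ ℝ^d be a convex body. Then there are constants τ(K) > 0 and λ(K) > 0 such that for all λ ≥ λ(K) and every lattice L = ρ(ℤ^d + s) with ρ ∈ SO(d), s ∈ ℝ^d: the Hausdorff distance satisfies d_H(λK, (λK)_L) ≤ τ(K). -/
/- Setting: `ℝ^d` with randomized integer lattices `ρ(ℤ^d + t)`, `ρ ∈ SO(d)` Haar
distributed, `t` uniform on `[0,1)^d`. -/

open MeasureTheory Metric Set Matrix Filter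
open scoped Pointwise RealInnerProductSpace ENNReal NNReal

noncomputable section

abbrev Ed (d : ℕ) : Type := EuclideanSpace ℝ (Fin d)

abbrev Mat (d : ℕ) : Type := Matrix (Fin d) (Fin d) ℝ

instance (d : ℕ) : MeasurableSpace (Mat d) :=
  inferInstanceAs (MeasurableSpace (Fin d → Fin d → ℝ))

/-- The set of special orthogonal `d × d` matrices (the rotation group `SO(d)`). -/
def SOd (d : ℕ) : Set (Mat d) := {A | A * Aᵀ = 1 ∧ A.det = 1}

/-- Reinterpret a plain vector as a point of Euclidean space. -/
def toEd (d : ℕ) (v : Fin d → ℝ) : Ed d := WithLp.toLp 2 v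

/-- The rotated and shifted integer lattice `ρ(ℤ^d + t) = {ρ(ω + t) : ω ∈ ℤ^d}`. -/
def lat (d : ℕ) (ρ : Mat d) (t : Ed d) : Set (Ed d) :=
  {x | ∃ ω : Fin d → ℤ, x = toEd d (ρ.mulVec fun j => (ω j : ℝ) + t j)}

/-- The half-open unit cube `[0,1)^d`. -/
def cube (d : ℕ) : Set (Ed d) := {t | ∀ i, 0 ≤ t i ∧ t i < 1}

/-- `μ` is the Haar probability measure on `SO(d)`, viewed as a measure on the
space of `d × d` matrices concentrated on the special orthogonal matrices and
invariant under left translation by rotations. -/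
def IsHaarSO (d : ℕ) (μ : Measure (Mat d)) : Prop :=
  IsProbabilityMeasure μ ∧ μ (SOd d)ᶜ = 0 ∧
    ∀ A ∈ SOd d, ∀ S : Set (Mat d), MeasurableSet S → μ ((A * ·) ⁻¹' S) = μ S

/-- The joint distribution of the parameters `(ρ, t)` of a uniform random lattice:
`ρ` is Haar distributed on `SO(d)` and `t` is uniform on `[0,1)^d`, independently. -/
def latticeParamMeasure (d : ℕ) (μ : Measure (Mat d)) : Measure (Mat d × Ed d) :=
  μ.prod (volume.restrict (cube d))

/-- The probability `P(A ∩ L = ∅)` that a uniform random lattice avoids the set `A`. -/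
def probAvoid (d : ℕ) (μ : Measure (Mat d)) (A : Set (Ed d)) : ℝ≥0∞ :=
  latticeParamMeasure d μ {p | A ∩ lat d p.1 p.2 = ∅}

/-- The support function `h_K(u) = sup {⟨x,u⟩ : x ∈ K}`. -/
def suppFn (d : ℕ) (K : Set (Ed d)) (u : Ed d) : ℝ :=
  sSup ((fun x => ⟪x, u⟫) '' K)

/-- The spherical Lebesgue (surface) measure on the unit sphere `S^{d-1}`. -/
def sphereμ (d : ℕ) : Measure (sphere (0 : Ed d) 1) :=
  (volume : Measure (Ed d)).toSphere

/-- `ω_d`, the total surface measure of the unit sphere. -/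
def ωd (d : ℕ) : ℝ := (sphereμ d univ).toReal

/-- The mean width `W(K) = (2/ω_d) ∫_{S^{d-1}} h_K(u) du`. -/
def meanWidth (d : ℕ) (K : Set (Ed d)) : ℝ :=
  (2 / ωd d) * ∫ u : sphere (0 : Ed d) 1, suppFn d K (↑u) ∂(sphereμ d)

/-- The expected mean width `E[W(K_L)]` of the randomized integer convex hull
`K_L = conv(K ∩ L)` over a uniform random lattice `L`. -/
def expMeanWidthHull (d : ℕ) (μ : Measure (Mat d)) (K : Set (Ed d)) : ℝ :=
  ∫ p, meanWidth d (convexHull ℝ (K ∩ lat d p.1 p.2)) ∂(latticeParamMeasure d μ)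

/-- The cap `K_{t,u} = {x ∈ K : ⟨x,u⟩ ≥ h_K(u) - t}` of `K` of width `t` in direction `u`. -/
def cap (d : ℕ) (K : Set (Ed d)) (t : ℝ) (u : Ed d) : Set (Ed d) :=
  {x ∈ K | suppFn d K u - t ≤ ⟪x, u⟫}

/-- A convex body: a compact convex set with nonempty interior. -/
def IsConvexBody (d : ℕ) (K : Set (Ed d)) : Prop :=
  IsCompact K ∧ Convex ℝ K ∧ (interior K).Nonempty


/- The lattice `ρ(ℤ^d + s)` meets every closed ball of radius `√d/2`: round the coordinates of
the centre in the rotated frame. If `closedBall c r ⊆ K ⊆ closedBall c R` and `x ∈ λK` maximises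
`⟪·, u⟫`, moving `x` towards `λc` by the fraction `θ = √d / (2λr) ≤ 1` gives the centre of a
ball of radius `√d/2` inside `λK`. A lattice point of that ball lies in `(λK)_L` and is lower
than `x` in direction `u` by at most `θλR + √d/2 = √d/2 · (1 + R/r)`. -/
theorem EuclideanSpace.norm_le_sqrt_card_mul {ι : Type*} [Fintype ι] {x : EuclideanSpace ℝ ι}
    {a : ℝ} (ha : 0 ≤ a) (hx : ∀ i, |x i| ≤ a) :
    ‖x‖ ≤ √(Fintype.card ι) * a := by
  rw [EuclideanSpace.norm_eq, ← Real.sqrt_sq ha, ← Real.sqrt_mul (Nat.cast_nonneg _)]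
  refine Real.sqrt_le_sqrt ?_
  calc ∑ i, ‖x i‖ ^ 2 ≤ ∑ _i : ι, a ^ 2 :=
        Finset.sum_le_sum fun i _ => by
          rw [Real.norm_eq_abs]; exact pow_le_pow_left₀ (abs_nonneg _) (hx i) 2
    _ = Fintype.card ι * a ^ 2 := by simp

theorem norm_toEd_mulVec_of_mul_transpose_eq_one {d : ℕ} {ρ : Mat d} (hρ : ρ * ρᵀ = 1)
    (v : Fin d → ℝ) : ‖toEd d (ρ *ᵥ v)‖ = ‖toEd d v‖ := by
  have hsq : ∀ w : Fin d → ℝ, ‖toEd d w‖ ^ 2 = w ⬝ᵥ w := fun w => by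
    rw [← real_inner_self_eq_norm_sq, EuclideanSpace.inner_eq_star_dotProduct]
    simp [toEd]
  have hdot : (ρ *ᵥ v) ⬝ᵥ (ρ *ᵥ v) = v ⬝ᵥ v := by
    rw [dotProduct_mulVec, ← mulVec_transpose, mulVec_mulVec, mul_eq_one_comm.mp hρ,
      one_mulVec]
  rw [← sq_eq_sq₀ (norm_nonneg _) (norm_nonneg _), hsq, hsq, hdot]

theorem exists_mem_lat_dist_le {d : ℕ} {ρ : Mat d} (hρ : ρ * ρᵀ = 1) (s z : Ed d) :
    ∃ p ∈ lat d ρ s, dist p z ≤ √d / 2 := by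
  set y : Fin d → ℝ := ρᵀ *ᵥ z
  set w : Fin d → ℝ := fun j => (round (y j - s j) : ℝ) + s j
  refine ⟨toEd d (ρ *ᵥ w), ⟨fun j => round (y j - s j), rfl⟩, ?_⟩
  have hz : z = toEd d (ρ *ᵥ y) := by
    simp only [y, toEd, mulVec_mulVec, hρ, one_mulVec, WithLp.toLp_ofLp]
  have hdist : dist (toEd d (ρ *ᵥ w)) z = ‖toEd d (w - y)‖ := by
    rw [hz, dist_eq_norm, ← norm_toEd_mulVec_of_mul_transpose_eq_one hρ, mulVec_sub]
    rfl
  have hcoord : ∀ j, |toEd d (w - y) j| ≤ 1 / 2 := fun j => by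
    have hw : toEd d (w - y) j = -(y j - s j - round (y j - s j)) := by
      show w j - y j = _
      ring
    rw [hw, abs_neg]
    exact abs_sub_round _
  calc dist (toEd d (ρ *ᵥ w)) z = ‖toEd d (w - y)‖ := hdist
    _ ≤ √(Fintype.card (Fin d)) * (1 / 2) :=
      EuclideanSpace.norm_le_sqrt_card_mul (by norm_num) hcoord
    _ = √d / 2 := by rw [Fintype.card_fin]; ring

theorem Convex.closedBall_combo_subset {E : Type*} [NormedAddCommGroup E] [NormedSpace ℝ E]
    {K : Set E} (hK : Convex ℝ K) {x c : E} {r θ : ℝ} (hx : x ∈ K)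
    (hcr : closedBall c r ⊆ K) (hr : 0 ≤ r) (hθ₀ : 0 ≤ θ) (hθ₁ : θ ≤ 1) :
    closedBall ((1 - θ) • x + θ • c) (θ * r) ⊆ K := by
  have hball :
      closedBall ((1 - θ) • x + θ • c) (θ * r) = {(1 - θ) • x} + θ • closedBall c r := by
    rw [smul_closedBall θ c hr, singleton_add_closedBall, Real.norm_of_nonneg hθ₀]
  rw [hball]
  exact (add_subset_add (singleton_subset_iff.mpr (smul_mem_smul_set hx))
    (smul_set_mono hcr)).trans (hK.set_combo_subset (by linarith) hθ₀ (by ring))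

theorem IsCompact.exists_suppFn_eq {d : ℕ} {K : Set (Ed d)} (hK : IsCompact K)
    (hne : K.Nonempty) (u : Ed d) : ∃ x ∈ K, suppFn d K u = ⟪x, u⟫ := by
  obtain ⟨x, hx, hmax⟩ :=
    (hK.image (continuous_id.inner continuous_const)).sSup_mem (hne.image fun x => ⟪x, u⟫)
  exact ⟨x, hx, hmax.symm⟩

theorem abs_suppFn_sub_suppFn_convexHull_inter_le {d : ℕ} {K L : Set (Ed d)}
    (hKc : IsCompact K) (hKcv : Convex ℝ K) {c : Ed d} {r R δ : ℝ} (hr : 0 < r) (hδr : δ ≤ r)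
    (hcr : closedBall c r ⊆ K) (hcR : K ⊆ closedBall c R) (hL : ∀ z, ∃ p ∈ L, dist p z ≤ δ)
    {u : Ed d} (hu : ‖u‖ = 1) :
    |suppFn d K u - suppFn d (convexHull ℝ (K ∩ L)) u| ≤ δ * (1 + R / r) := by
  obtain ⟨x, hxK, hx⟩ := hKc.exists_suppFn_eq ⟨c, hcr (mem_closedBall_self hr.le)⟩ u
  have hδ : 0 ≤ δ := dist_nonneg.trans (hL c).choose_spec.2
  set θ := δ / r
  set q := (1 - θ) • x + θ • c
  have hqK : closedBall q δ ⊆ K := by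
    have := hKcv.closedBall_combo_subset hxK hcr hr.le (by positivity)
      ((div_le_one hr).mpr hδr)
    rwa [div_mul_cancel₀ δ hr.ne'] at this
  obtain ⟨p, hpL, hpq⟩ := hL q
  have hpH : p ∈ convexHull ℝ (K ∩ L) := subset_convexHull ℝ _ ⟨hqK hpq, hpL⟩
  have hHK : convexHull ℝ (K ∩ L) ⊆ K := convexHull_min inter_subset_left hKcv
  have hbdd : BddAbove ((⟪·, u⟫) '' K) :=
    (hKc.image (continuous_id.inner continuous_const)).bddAbove
  have hHle : suppFn d (convexHull ℝ (K ∩ L)) u ≤ suppFn d K u :=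
    csSup_le_csSup hbdd ⟨_, mem_image_of_mem _ hpH⟩ (image_mono hHK)
  have hpu : ⟪p, u⟫ ≤ suppFn d (convexHull ℝ (K ∩ L)) u :=
    le_csSup (hbdd.mono (image_mono hHK)) (mem_image_of_mem _ hpH)
  have hxq : ⟪x, u⟫ - ⟪q, u⟫ ≤ θ * R := by
    have : ⟪x, u⟫ - ⟪q, u⟫ = θ * ⟪x - c, u⟫ := by
      simp only [q, inner_add_left, inner_sub_left, real_inner_smul_left]; ring
    rw [this]
    refine mul_le_mul_of_nonneg_left ?_ (by positivity)
    calc ⟪x - c, u⟫ ≤ ‖x - c‖ * ‖u‖ := real_inner_le_norm _ _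
      _ ≤ R := by rw [hu, mul_one, ← dist_eq_norm]; exact hcR hxK
  have hqp : ⟪q, u⟫ - ⟪p, u⟫ ≤ δ := by
    calc ⟪q, u⟫ - ⟪p, u⟫ = ⟪q - p, u⟫ := (inner_sub_left _ _ _).symm
      _ ≤ ‖q - p‖ * ‖u‖ := real_inner_le_norm _ _
      _ ≤ δ := by rw [hu, mul_one, ← dist_eq_norm, dist_comm]; exact hpq
  rw [abs_of_nonneg (sub_nonneg.mpr hHle)]
  calc suppFn d K u - suppFn d (convexHull ℝ (K ∩ L)) u ≤ θ * R + δ := by linarith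
    _ = δ * (1 + R / r) := by ring

/-- **Theorem (Hausdorff distance bound).** For a convex body `K ⊆ ℝ^d` there are
`τ(K), λ(K) > 0` such that `d_H(λK, (λK)_L) ≤ τ(K)` for all `λ ≥ λ(K)` and every lattice
`L = ρ(ℤ^d + s)`, where `d_H(K,Q) = max_u |h_K(u) - h_Q(u)|`. -/
theorem hausdorff_distance_hull_bounded (d : ℕ) (hd : 2 ≤ d)
    (K : Set (Ed d)) (hK : IsConvexBody d K) :
    ∃ τ lam₀ : ℝ, 0 < τ ∧ 0 < lam₀ ∧
      ∀ l : ℝ, lam₀ ≤ l →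
        ∀ ρ ∈ SOd d, ∀ s : Ed d,
          ∀ u : Ed d, ‖u‖ = 1 →
            |suppFn d (l • K) u -
                suppFn d (convexHull ℝ ((l • K) ∩ lat d ρ s)) u| ≤ τ := by
  obtain ⟨hKc, hKcv, c, hc⟩ := hK
  obtain ⟨r, hr, hcr⟩ := nhds_basis_closedBall.mem_iff.mp (mem_interior_iff_mem_nhds.mp hc)
  obtain ⟨R, hcR⟩ := hKc.isBounded.subset_closedBall c
  have hR : 0 ≤ R := dist_nonneg.trans (hcR (hcr (mem_closedBall_self hr.le)))
  have hδ : 0 < √d / 2 := by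
    have : 0 < d := by omega
    positivity
  refine ⟨√d / 2 * (1 + R / r), √d / 2 / r, mul_pos hδ (by positivity), div_pos hδ hr, ?_⟩
  intro l hl ρ hρ s u hu
  have hl₀ : 0 < l := (div_pos hδ hr).trans_le hl
  have hscale : ∀ {ε : ℝ}, 0 ≤ ε → l • closedBall c ε = closedBall (l • c) (l * ε) :=
    fun hε => by rw [smul_closedBall l c hε, Real.norm_of_nonneg hl₀.le]
  convert abs_suppFn_sub_suppFn_convexHull_inter_le (hKc.smul l) (hKcv.smul l)
    (mul_pos hl₀ hr) ((div_le_iff₀ hr).mp hl) ((hscale hr.le) ▸ smul_set_mono hcr)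
    ((hscale hR) ▸ smul_set_mono hcR) (exists_mem_lat_dist_le hρ.1 s) hu using 3
  field_simp

end
end

section
/- Let K ⊂ ℝ^d be a convex body. Then there exist a measurable set Σ ⊂ S^{d−1} of positive spherical Lebesgue measure and a radius R > 0, both depending on K, such that for every u ∈ Σ there is a boundary point p ∈ ∂K with K ⊂ p + R(B^d − u), i.e., K is contained in a ball of radius R touching K at p with outer normal direction u. -/
/- Setting: `ℝ^d` with randomized integer lattices `ρ(ℤ^d + t)`, `ρ ∈ SO(d)` Haar
distributed, `t` uniform on `[0,1)^d`. -/

open MeasureTheory Metric Set Matrix Filter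
open scoped Pointwise RealInnerProductSpace ENNReal NNReal

noncomputable section

/- For `z ∈ ℝ^d` let `f z` be a farthest point of `K` from `z`. The ball about `z` through `f z`
contains `K` and touches it at `f z ∈ ∂K`, so it sits inside the ball of any radius `R ≥ ‖f z - z‖`
touching `K` at `f z` with outer normal `(f z - z) / ‖f z - z‖`. Comparing the farthest-point
inequalities at two centres shows that `z ↦ f z - z` does not decrease distances, so it maps a ball
onto a set of positive volume; rescaled by `1 / R`, that set lies in the cone over the good normal
directions, which therefore have positive spherical measure. -/

open Module

section Haar

variable {E : Type*} [NormedAddCommGroup E] [NormedSpace ℝ E] [FiniteDimensional ℝ E]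
  [MeasurableSpace E] [BorelSpace E]

theorem AntilipschitzWith.addHaar_le_addHaar_image {s : E → E} (hs : AntilipschitzWith 1 s)
    (μ : Measure E) [μ.IsAddHaarMeasure] (A : Set E) : μ A ≤ μ (s '' A) := by
  have h := hs.le_hausdorffMeasure_image (d := finrank ℝ E) (Nat.cast_nonneg _) A
  rw [ENNReal.coe_one, ENNReal.one_rpow, one_mul] at h
  rw [μ.isAddLeftInvariant_eq_smul μH[finrank ℝ E], Measure.smul_apply, Measure.smul_apply]
  gcongr

theorem toSphere_pos_of_addHaar_cone_pos [Nontrivial E] (μ : Measure E)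
    {S : Set (sphere (0 : E) 1)} (hS : MeasurableSet S)
    (h : 0 < μ (Ioo (0 : ℝ) 1 • ((↑) '' S : Set E))) : 0 < μ.toSphere S := by
  rw [Measure.toSphere_apply' μ hS]
  exact ENNReal.mul_pos (by exact_mod_cast finrank_pos.ne') h.ne'

end Haar

section FarthestPoint

open Topology Filter

variable {E : Type*} [NormedAddCommGroup E]

theorem norm_le_norm_sub_of_norm_add_le [InnerProductSpace ℝ E] {a b w : E}
    (h₁ : ‖a + w‖ ≤ ‖b‖) (h₂ : ‖b - w‖ ≤ ‖a‖) : ‖w‖ ≤ ‖b - a‖ := by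
  have key : ‖w‖ ^ 2 ≤ ⟪b - a, w⟫ := by
    have e₁ := norm_add_sq_real a w
    have e₂ := norm_sub_sq_real b w
    rw [inner_sub_left]
    nlinarith [norm_nonneg (a + w), norm_nonneg (b - w), norm_nonneg a, norm_nonneg b]
  have hcs := real_inner_le_norm (b - a) w
  nlinarith [norm_nonneg w, norm_nonneg (b - a)]

theorem antilipschitzWith_farthest_sub [InnerProductSpace ℝ E] {K : Set E} {f : E → E}
    (hfK : ∀ z, f z ∈ K) (hf : ∀ z, IsMaxOn (‖· - z‖) K (f z)) :
    AntilipschitzWith 1 fun z => f z - z := by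
  refine antilipschitzWith_iff_le_mul_dist.2 fun z₁ z₂ => ?_
  rw [NNReal.coe_one, one_mul, dist_eq_norm, dist_eq_norm, norm_sub_rev (f z₁ - z₁)]
  refine norm_le_norm_sub_of_norm_add_le ?_ ?_
  · simpa only [sub_add_sub_cancel] using isMaxOn_iff.1 (hf z₂) _ (hfK z₁)
  · simpa only [sub_sub_sub_cancel_right] using isMaxOn_iff.1 (hf z₁) _ (hfK z₂)

theorem ne_of_isMaxOn_norm_sub {K : Set E} (hK : K.Nontrivial) {z p : E}
    (hmax : IsMaxOn (‖· - z‖) K p) : p ≠ z := by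
  rintro rfl
  obtain ⟨x, hx, hxp⟩ := hK.exists_ne p
  have : ‖x - p‖ ≤ 0 := by simpa using isMaxOn_iff.1 hmax x hx
  exact hxp (sub_eq_zero.1 (norm_le_zero_iff.1 this))

variable [NormedSpace ℝ E]

theorem Set.Nonempty.nontrivial_of_interior [Nontrivial E] {K : Set E}
    (h : (interior K).Nonempty) : K.Nontrivial := by
  by_contra hK
  obtain rfl | ⟨x, rfl⟩ := (Set.not_nontrivial_iff.1 hK).eq_empty_or_singleton
  · simp at h
  · simp [interior_singleton] at h

theorem mem_frontier_of_isMaxOn_norm_sub {K : Set E} {z p : E} (hp : p ∈ K)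
    (hmax : IsMaxOn (‖· - z‖) K p) (hpz : p ≠ z) : p ∈ frontier K := by
  refine ⟨subset_closure hp, fun hint => ?_⟩
  have hline : Tendsto (fun t : ℝ => p + t • (p - z)) (𝓝[>] 0) (𝓝 p) :=
    tendsto_nhdsWithin_of_tendsto_nhds <| by
      simpa using ((continuous_id.smul continuous_const).const_add p).tendsto (0 : ℝ)
  obtain ⟨t, htK, ht⟩ := ((hline.eventually_mem (mem_interior_iff_mem_nhds.1 hint)).and
    self_mem_nhdsWithin).exists
  have hfar := isMaxOn_iff.1 hmax _ htK
  rw [show p + t • (p - z) - z = (1 + t) • (p - z) by module, norm_smul,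
    Real.norm_of_nonneg (by linarith)] at hfar
  nlinarith [norm_pos_iff.2 (sub_ne_zero.2 hpz), ht]

end FarthestPoint

section RollingDirections

variable {E : Type*} [NormedAddCommGroup E] [NormedSpace ℝ E]

def rollingDirections (K : Set E) (R : ℝ) : Set (sphere (0 : E) 1) :=
  {u | ∃ p ∈ frontier K, K ⊆ closedBall (p - R • (u : E)) R}

omit [NormedSpace ℝ E] in
theorem isClosed_setOf_subset_closedBall (K : Set E) (R : ℝ) :
    IsClosed {c : E | K ⊆ closedBall c R} := by
  have : {c : E | K ⊆ closedBall c R} = ⋂ x ∈ K, closedBall x R := by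
    ext c
    simp [subset_def, dist_comm c]
  exact this ▸ isClosed_biInter fun _ _ => isClosed_closedBall

theorem IsCompact.isClosed_rollingDirections [ProperSpace E] {K : Set E} (hK : IsCompact K)
    (R : ℝ) : IsClosed (rollingDirections K R) := by
  set T : Set (E × sphere (0 : E) 1) := (frontier K ×ˢ univ) ∩
    (fun pu => pu.1 - R • (pu.2 : E)) ⁻¹' {c | K ⊆ closedBall c R}
  have hT : IsCompact T := by
    have hfr : IsCompact (frontier K) :=
      hK.of_isClosed_subset isClosed_frontier hK.isClosed.frontier_subset
    exact (hfr.prod isCompact_univ).inter_right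
      ((isClosed_setOf_subset_closedBall K R).preimage (by fun_prop))
  have : rollingDirections K R = Prod.snd '' T := by
    ext u
    constructor
    · rintro ⟨p, hp, hsub⟩
      exact ⟨(p, u), ⟨⟨hp, mem_univ _⟩, hsub⟩, rfl⟩
    · rintro ⟨⟨p, u⟩, ⟨⟨hp, -⟩, hsub⟩, rfl⟩
      exact ⟨p, hp, hsub⟩
  exact this ▸ (hT.image continuous_snd).isClosed

theorem normalize_mem_rollingDirections {K : Set E} {z p : E} {R : ℝ} (hp : p ∈ K)
    (hmax : IsMaxOn (‖· - z‖) K p) (hpz : p ≠ z) (hR : ‖p - z‖ ≤ R) :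
    ‖p - z‖⁻¹ • (p - z) ∈ ((↑) '' rollingDirections K R : Set E) := by
  set g := ‖p - z‖
  set u := g⁻¹ • (p - z)
  have hg : 0 < g := norm_pos_iff.2 (sub_ne_zero.2 hpz)
  have hu : ‖u‖ = 1 := norm_smul_inv_norm (sub_ne_zero.2 hpz)
  have hgu : g • u = p - z := smul_inv_smul₀ hg.ne' _
  have hball : K ⊆ closedBall z g := fun x hx => by
    simpa [dist_eq_norm] using isMaxOn_iff.1 hmax x hx
  refine ⟨⟨u, by simpa using hu⟩, ⟨p, mem_frontier_of_isMaxOn_norm_sub hp hmax hpz,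
    hball.trans (closedBall_subset_closedBall' ?_)⟩, rfl⟩
  have : z - (p - R • u) = (R - g) • u := by rw [sub_smul, hgu]; abel
  rw [dist_eq_norm, this, norm_smul, hu, mul_one, Real.norm_of_nonneg (by linarith)]
  linarith

theorem inv_smul_mem_Ioo_smul {S : Set E} {v : E} {R : ℝ} (hv : v ≠ 0) (hvR : ‖v‖ < R)
    (hS : ‖v‖⁻¹ • v ∈ S) : R⁻¹ • v ∈ Ioo (0 : ℝ) 1 • S := by
  have hpos : 0 < ‖v‖ := norm_pos_iff.2 hv
  have hR : 0 < R := hpos.trans hvR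
  refine ⟨‖v‖ / R, ⟨by positivity, (div_lt_one hR).2 hvR⟩, _, hS, ?_⟩
  change (‖v‖ / R) • ‖v‖⁻¹ • v = R⁻¹ • v
  rw [smul_smul]
  congr 1
  field_simp

end RollingDirections

theorem IsCompact.exists_toSphere_rollingDirections_pos {E : Type*} [NormedAddCommGroup E]
    [InnerProductSpace ℝ E] [FiniteDimensional ℝ E] [MeasurableSpace E] [BorelSpace E]
    (μ : Measure E) [μ.IsAddHaarMeasure] {K : Set E} (hK : IsCompact K) (hKnt : K.Nontrivial) :
    ∃ R > 0, 0 < μ.toSphere (rollingDirections K R) := by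
  have : Nontrivial E := nontrivial_of_nontrivial hKnt
  obtain ⟨M, hM⟩ := hK.isBounded.subset_closedBall 0
  have hM0 : 0 ≤ M := nonempty_closedBall.1 (hKnt.nonempty.mono hM)
  choose f hfK hfmax using fun z : E =>
    hK.exists_isMaxOn hKnt.nonempty (f := (‖· - z‖)) (by fun_prop)
  set s := fun z => f z - z
  have hcone : (M + 1)⁻¹ • (s '' ball 0 1) ⊆
      Ioo (0 : ℝ) 1 • ((↑) '' rollingDirections K (M + 1) : Set E) := by
    rintro _ ⟨_, ⟨z, hz, rfl⟩, rfl⟩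
    have hne := ne_of_isMaxOn_norm_sub hKnt (hfmax z)
    have hlt : ‖f z - z‖ < M + 1 := calc
      ‖f z - z‖ ≤ ‖f z‖ + ‖z‖ := norm_sub_le _ _
      _ < M + 1 := add_lt_add_of_le_of_lt (by simpa using hM (hfK z)) (by simpa using hz)
    exact inv_smul_mem_Ioo_smul (sub_ne_zero.2 hne) hlt
      (normalize_mem_rollingDirections (hfK z) (hfmax z) hne hlt.le)
  refine ⟨M + 1, by linarith, toSphere_pos_of_addHaar_cone_pos μ
    (hK.isClosed_rollingDirections _).measurableSet ?_⟩
  calc 0 < μ ((M + 1)⁻¹ • (s '' ball 0 1)) := by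
        rw [Measure.addHaar_smul_of_nonneg μ (by positivity)]
        refine ENNReal.mul_pos (by positivity) (ne_of_gt ?_)
        exact (measure_ball_pos μ 0 one_pos).trans_le
          ((antilipschitzWith_farthest_sub hfK hfmax).addHaar_le_addHaar_image μ _)
    _ ≤ _ := measure_mono hcone

/-- **Lemma (dual rolling ball).** For a convex body `K ⊆ ℝ^d` there are a measurable set
`Σ ⊆ S^{d-1}` of positive spherical measure and `R > 0` such that every `u ∈ Σ` admits a
boundary point `p ∈ ∂K` with `K ⊆ p + R(B^d - u)`. -/
theorem dual_rolling_ball (d : ℕ) (hd : 2 ≤ d)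
    (K : Set (Ed d)) (hK : IsConvexBody d K) :
    ∃ Sig : Set (sphere (0 : Ed d) 1), MeasurableSet Sig ∧ 0 < sphereμ d Sig ∧
      ∃ R : ℝ, 0 < R ∧
        ∀ u ∈ Sig, ∃ p ∈ frontier K, K ⊆ closedBall (p - R • (u : Ed d)) R := by
  obtain ⟨hKc, -, hKint⟩ := hK
  have : Nonempty (Fin d) := ⟨⟨0, by omega⟩⟩
  obtain ⟨R, hR, hpos⟩ :=
    hKc.exists_toSphere_rollingDirections_pos volume hKint.nontrivial_of_interior
  exact ⟨rollingDirections K R, (hKc.isClosed_rollingDirections R).measurableSet, hpos, R, hR,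
    fun _ hu => hu⟩

end
end

section
/- For every t with 0 ≤ t ≤ 1 and every unit vector u ∈ S^{d−1}, the volume of the cap of width t of the unit ball satisfies (1/d) κ_{d−1} t^{(d+1)/2} ≤ V_d( B^d_{t,u} ) ≤ 2^{(d−1)/2} κ_{d−1} t^{(d+1)/2}, where κ_{d−1} is the volume of the (d−1)-dimensional unit ball. -/
/- Setting: `ℝ^d` with randomized integer lattices `ρ(ℤ^d + t)`, `ρ ∈ SO(d)` Haar
distributed, `t` uniform on `[0,1)^d`. -/

open MeasureTheory Metric Set Matrix Filter
open scoped Pointwise RealInnerProductSpace ENNReal NNReal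

noncomputable section

/-- `κ_n`, the volume of the `n`-dimensional unit ball. -/
def kappa (n : ℕ) : ℝ := (volume (ball (0 : EuclideanSpace ℝ (Fin n)) 1)).toReal


/-- The cap of width `t` of the ball `B(0,r)` in direction `u`:
`B(0,r)_{t,u} = {x ∈ B(0,r) : ⟨x,u⟩ ≥ r - t}`. -/
def ballCap (d : ℕ) (r t : ℝ) (u : Ed d) : Set (Ed d) :=
  {x ∈ closedBall (0 : Ed d) r | r - t ≤ ⟪x, u⟫}

/-! Rotating `u` onto the first coordinate axis turns the cap into
`{(a, y) ∈ ℝ × ℝ^{d-1} : a² + ‖y‖² ≤ 1, 1 - t ≤ a}`. This set lies in the cylinder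
`[1 - t, 1] × B(0, √(2t))` and, for `t ≤ 1`, contains the cone with apex `(1, 0)` over the
disc of radius `√t` at height `1 - t`. Both are solids of revolution, whose volumes
`∫ r(a)^{d-1} da · κ_{d-1}` are `2^{(d-1)/2} t^{(d+1)/2} κ_{d-1}` and
`t^{(d+1)/2} κ_{d-1} / d`. -/

section SolidOfRevolution

variable {E : Type*} [NormedAddCommGroup E]

def solidOfRevolution (a b : ℝ) (f : ℝ → ℝ) : Set (ℝ × E) :=
  {p | p.1 ∈ Icc a b ∧ ‖p.2‖ ≤ f p.1}

def prodBallCap (r t : ℝ) : Set (ℝ × E) :=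
  {p | p.1 ^ 2 + ‖p.2‖ ^ 2 ≤ r ^ 2 ∧ r - t ≤ p.1}

theorem prodBallCap_subset_solidOfRevolution (t : ℝ) :
    (prodBallCap 1 t : Set (ℝ × E)) ⊆ solidOfRevolution (1 - t) 1 fun _ ↦ √(2 * t) := by
  rintro ⟨a, y⟩ ⟨hball, hcap⟩
  have ha : a ≤ 1 := by nlinarith [sq_nonneg ‖y‖]
  refine ⟨⟨hcap, ha⟩, Real.le_sqrt_of_sq_le ?_⟩
  nlinarith

theorem solidOfRevolution_subset_prodBallCap {t : ℝ} (ht₀ : 0 < t) (ht₁ : t ≤ 1) :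
    (solidOfRevolution (1 - t) 1 fun s ↦ (1 - s) / √t : Set (ℝ × E)) ⊆ prodBallCap 1 t := by
  rintro ⟨a, y⟩ ⟨⟨hcap, ha⟩, hy⟩
  refine ⟨?_, hcap⟩
  have hy' : ‖y‖ ^ 2 * t ≤ (1 - a) ^ 2 := by
    rw [le_div_iff₀ (Real.sqrt_pos.2 ht₀)] at hy
    calc ‖y‖ ^ 2 * t = (‖y‖ * √t) ^ 2 := by rw [mul_pow, Real.sq_sqrt ht₀.le]
      _ ≤ (1 - a) ^ 2 := pow_le_pow_left₀ (by positivity) hy 2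
  nlinarith

theorem volume_prod_solidOfRevolution [NormedSpace ℝ E] [MeasurableSpace E] [BorelSpace E]
    [FiniteDimensional ℝ E] (μ : Measure E) [μ.IsAddHaarMeasure] {a b : ℝ} (hab : a ≤ b)
    {f : ℝ → ℝ} (hf : Continuous f) (hf₀ : ∀ s ∈ Icc a b, 0 ≤ f s) :
    (volume.prod μ) (solidOfRevolution a b f) =
      ENNReal.ofReal (∫ s in a..b, f s ^ Module.finrank ℝ E) * μ (ball 0 1) := by
  have hmeas : MeasurableSet (solidOfRevolution a b f : Set (ℝ × E)) :=
    (isClosed_Icc.preimage continuous_fst).measurableSet.inter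
      (isClosed_le continuous_snd.norm (hf.comp continuous_fst)).measurableSet
  have hslice (s : ℝ) : μ (Prod.mk s ⁻¹' (solidOfRevolution a b f : Set (ℝ × E))) =
      (Icc a b).indicator
        (fun s ↦ ENNReal.ofReal (f s ^ Module.finrank ℝ E) * μ (ball 0 1)) s := by
    by_cases hs : s ∈ Icc a b
    · have : Prod.mk s ⁻¹' (solidOfRevolution a b f : Set (ℝ × E)) = closedBall 0 (f s) := by
        ext y
        simp only [solidOfRevolution, mem_preimage, mem_ofPred_eq, hs, true_and,
          mem_closedBall_zero_iff]
      rw [this, indicator_of_mem hs, μ.addHaar_closedBall _ (hf₀ s hs)]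
    · have : Prod.mk s ⁻¹' (solidOfRevolution a b f : Set (ℝ × E)) = ∅ := by
        ext y
        simp only [solidOfRevolution, mem_preimage, mem_ofPred_eq, hs, false_and,
          mem_empty_iff_false]
      rw [this, indicator_of_notMem hs, measure_empty]
  rw [Measure.prod_apply hmeas, lintegral_congr hslice, lintegral_indicator measurableSet_Icc,
    lintegral_mul_const _ (by fun_prop), intervalIntegral.integral_of_le hab,
    ← integral_Icc_eq_integral_Ioc, ofReal_integral_eq_lintegral_ofReal]
  · exact (hf.pow _).integrableOn_Icc
  · filter_upwards [ae_restrict_mem measurableSet_Icc] with s hs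
    exact pow_nonneg (hf₀ s hs) _

end SolidOfRevolution

theorem mul_sqrt_two_mul_pow {t : ℝ} (ht : 0 ≤ t) (n : ℕ) :
    t * √(2 * t) ^ n = 2 ^ ((n : ℝ) / 2) * t ^ (((n : ℝ) + 2) / 2) := by
  rw [Real.sqrt_eq_rpow, ← Real.rpow_natCast, ← Real.rpow_mul (by positivity),
    Real.mul_rpow zero_le_two ht, add_div, div_self two_ne_zero, Real.rpow_add' ht (by positivity),
    Real.rpow_one]
  ring_nf

theorem integral_one_sub_div_sqrt_pow {t : ℝ} (ht : 0 < t) (n : ℕ) :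
    ∫ s in (1 - t)..1, ((1 - s) / √t) ^ n = t ^ (((n : ℝ) + 2) / 2) / (n + 1) := by
  simp_rw [div_pow]
  rw [intervalIntegral.integral_div, intervalIntegral.integral_comp_sub_left (· ^ n) 1,
    integral_pow, sub_sub_cancel, sub_self, zero_pow n.succ_ne_zero, sub_zero, div_right_comm]
  congr 1
  rw [Real.sqrt_eq_rpow, ← Real.rpow_natCast, ← Real.rpow_natCast, ← Real.rpow_mul ht.le,
    ← Real.rpow_sub ht]
  congr 1
  push_cast
  ring

theorem EuclideanSpace.volume_preserving_fin_succ (n : ℕ) :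
    MeasurePreserving (fun x : Ed (n + 1) ↦ (x 0, WithLp.toLp 2 fun j : Fin n ↦ x j.succ)) := by
  have h₁ := EuclideanSpace.volume_preserving_symm_measurableEquiv_toLp (Fin (n + 1))
  have h₂ := volume_preserving_piFinSuccAbove (fun _ : Fin (n + 1) ↦ ℝ) 0
  have h₃ := (MeasurePreserving.id (volume : Measure ℝ)).prod
    (EuclideanSpace.volume_preserving_symm_measurableEquiv_toLp (Fin n)).symm
  exact (h₃.comp h₂).comp h₁

theorem EuclideanSpace.norm_sq_fin_succ {n : ℕ} (x : Ed (n + 1)) :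
    ‖x‖ ^ 2 = x 0 ^ 2 + ‖(WithLp.toLp 2 fun j : Fin n ↦ x j.succ : Ed n)‖ ^ 2 := by
  simp [EuclideanSpace.norm_sq_eq, Fin.sum_univ_succ]

theorem exists_orthonormalBasis_apply_zero_eq {n : ℕ} {u : Ed (n + 1)} (hu : ‖u‖ = 1) :
    ∃ b : OrthonormalBasis (Fin (n + 1)) ℝ (Ed (n + 1)), b 0 = u := by
  have hv : Orthonormal ℝ (({0} : Set (Fin (n + 1))).domRestrict fun _ ↦ u) :=
    ⟨fun _ ↦ hu, fun i j hij ↦ absurd (Subsingleton.elim i j) hij⟩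
  obtain ⟨b, hb⟩ := hv.exists_orthonormalBasis_extension_of_card_eq (by simp)
  exact ⟨b, hb 0 rfl⟩

theorem volume_ballCap_eq {n : ℕ} {r : ℝ} (hr : 0 ≤ r) (t : ℝ) {u : Ed (n + 1)}
    (hu : ‖u‖ = 1) :
    volume (ballCap (n + 1) r t u) = volume (prodBallCap r t : Set (ℝ × Ed n)) := by
  obtain ⟨b, hb⟩ := exists_orthonormalBasis_apply_zero_eq hu
  have hF := (EuclideanSpace.volume_preserving_fin_succ n).comp b.measurePreserving_repr
  have hS : MeasurableSet (prodBallCap r t : Set (ℝ × Ed n)) := by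
    refine IsClosed.measurableSet (IsClosed.inter ?_ (isClosed_le continuous_const continuous_fst))
    exact isClosed_le ((continuous_fst.pow 2).add (continuous_snd.norm.pow 2)) continuous_const
  rw [← hF.measure_preimage hS.nullMeasurableSet]
  congr 1
  ext x
  have hnorm := EuclideanSpace.norm_sq_fin_succ (b.repr x)
  rw [b.repr.norm_map, b.repr_apply_apply, hb, real_inner_comm] at hnorm
  rw [ballCap, mem_ofPred_eq, mem_closedBall_zero_iff, ← sq_le_sq₀ (norm_nonneg x) hr, hnorm]
  simp only [prodBallCap, mem_preimage, mem_ofPred_eq, Function.comp_apply, b.repr_apply_apply,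
    hb, real_inner_comm]

theorem volume_ballCap_le {n : ℕ} {t : ℝ} (ht : 0 ≤ t) {u : Ed (n + 1)} (hu : ‖u‖ = 1) :
    (volume (ballCap (n + 1) 1 t u)).toReal ≤
      2 ^ ((n : ℝ) / 2) * kappa n * t ^ (((n : ℝ) + 2) / 2) := by
  have hcyl := volume_prod_solidOfRevolution (E := Ed n) volume (by linarith : 1 - t ≤ 1)
    continuous_const fun _ _ ↦ Real.sqrt_nonneg (2 * t)
  rw [intervalIntegral.integral_const, sub_sub_cancel, smul_eq_mul, finrank_euclideanSpace_fin,
    mul_sqrt_two_mul_pow ht] at hcyl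
  have hle : volume (ballCap (n + 1) 1 t u) ≤
      ENNReal.ofReal (2 ^ ((n : ℝ) / 2) * t ^ (((n : ℝ) + 2) / 2)) *
        volume (ball (0 : Ed n) 1) := by
    rw [volume_ballCap_eq zero_le_one t hu, ← hcyl, Measure.volume_eq_prod]
    exact measure_mono (prodBallCap_subset_solidOfRevolution t)
  calc _ ≤ _ := ENNReal.toReal_mono (ENNReal.mul_ne_top ENNReal.ofReal_ne_top
        measure_ball_lt_top.ne) hle
    _ = _ := by rw [ENNReal.toReal_mul, ENNReal.toReal_ofReal (by positivity), kappa]; ring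

theorem le_volume_ballCap {n : ℕ} {t : ℝ} (ht : t ∈ Icc (0 : ℝ) 1) {u : Ed (n + 1)}
    (hu : ‖u‖ = 1) :
    1 / (n + 1 : ℝ) * kappa n * t ^ (((n : ℝ) + 2) / 2) ≤
      (volume (ballCap (n + 1) 1 t u)).toReal := by
  obtain ⟨ht₀, ht₁⟩ := ht
  rcases ht₀.eq_or_lt with rfl | ht₀
  · rw [Real.zero_rpow (by positivity), mul_zero]
    exact ENNReal.toReal_nonneg
  have hcone := volume_prod_solidOfRevolution (E := Ed n) volume (by linarith : 1 - t ≤ 1)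
    (by fun_prop : Continuous fun s ↦ (1 - s) / √t)
    fun s hs ↦ div_nonneg (sub_nonneg.2 hs.2) (Real.sqrt_nonneg t)
  rw [finrank_euclideanSpace_fin, integral_one_sub_div_sqrt_pow ht₀] at hcone
  have hle : ENNReal.ofReal (t ^ (((n : ℝ) + 2) / 2) / (n + 1)) * volume (ball (0 : Ed n) 1) ≤
      volume (ballCap (n + 1) 1 t u) := by
    rw [volume_ballCap_eq zero_le_one t hu, ← hcone, Measure.volume_eq_prod]
    exact measure_mono (solidOfRevolution_subset_prodBallCap ht₀ ht₁)
  have hfin : volume (ballCap (n + 1) 1 t u) ≠ ⊤ :=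
    (measure_mono (sep_subset _ _)).trans_lt measure_closedBall_lt_top |>.ne
  calc _ = (ENNReal.ofReal (t ^ (((n : ℝ) + 2) / 2) / (n + 1)) *
        volume (ball (0 : Ed n) 1)).toReal := by
        rw [ENNReal.toReal_mul, ENNReal.toReal_ofReal (by positivity), kappa]; ring
    _ ≤ _ := ENNReal.toReal_mono hfin hle

/-- **Lemma (unit ball cap volume).** For `0 ≤ t ≤ 1` and unit `u`,
`(1/d) κ_{d-1} t^{(d+1)/2} ≤ V_d(B^d_{t,u}) ≤ 2^{(d-1)/2} κ_{d-1} t^{(d+1)/2}`. -/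
theorem unit_ball_cap_volume_bounds (d : ℕ) (hd : 2 ≤ d)
    (t : ℝ) (ht : t ∈ Icc (0 : ℝ) 1) (u : Ed d) (hu : ‖u‖ = 1) :
    (1 / (d : ℝ)) * kappa (d - 1) * t ^ (((d : ℝ) + 1) / 2) ≤
        (volume (ballCap d 1 t u)).toReal ∧
      (volume (ballCap d 1 t u)).toReal ≤
        (2 : ℝ) ^ (((d : ℝ) - 1) / 2) * kappa (d - 1) * t ^ (((d : ℝ) + 1) / 2) := by
  obtain ⟨n, rfl⟩ : ∃ n, d = n + 1 := ⟨d - 1, by omega⟩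
  have hexp_add : ((↑(n + 1) : ℝ) + 1) / 2 = ((n : ℝ) + 2) / 2 := by push_cast; ring
  have hexp_sub : ((↑(n + 1) : ℝ) - 1) / 2 = (n : ℝ) / 2 := by push_cast; ring
  rw [Nat.add_sub_cancel, hexp_add, hexp_sub, Nat.cast_succ]
  exact ⟨le_volume_ballCap ht hu, volume_ballCap_le ht.1 hu⟩
end
end
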